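/- Let E be a real inner product space, D a finite set with |D| = N, and f_n : E → ℝ differentiable for n ∈ D with global loss F(w) = (1/N)·∑_{n∈D} f_n(w). Assume F is μ-strongly convex and L-smooth with 0 < μ ≤ L, the sample-gradient bound ‖∇f_n(w)‖² ≤ ξ1 + ξ2·‖∇F(w)‖² holds for all n ∈ D and w ∈ E (ξ1 ≥ 0, ξ2 > 0), and w* is a global minimizer of F. Let N_f, N_c be positive integers with N_f ≤ N, N_c ≤ N, A = N_f·(N−N_f) + N_c·(N−N_c) > 0, and 0 < ξ2 < (N_f+N_c)²/(4A); set a1 = N_f/(N_f+N_c), a2 = N_c/(N_f+N_c), ρ1 = 1 − μ/L + 4μξ2·A/(L·(N_f+N_c)²), ρ2 = 2ξ1·A/(L·(N_f+N_c)²). For each round t = 1, …, T, let S_{f,t}, S_{c,t} ⊆ D with |S_{f,t}| = N_f, |S_{c,t}| = N_c, and update with error-free aggregation: w_{t+1} = w_t − (1/L)·(a1·(1/N_f)·∑_{n∈S_{f,t}} ∇f_n(w_t) + a2·(1/N_c)·∑_{n∈S_{c,t}} ∇f_n(w_t)). Then F(w_{T+1}) − F(w*) ≤ ρ1^T·(F(w_1)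 − F(w*)) + ρ2·(1 − ρ1^T)/(1 − ρ1). -/

import Mathlib

/-!
A round of error-free SemiFL is a gradient step of size `1 / L` along the inexact direction
`v = a₁ v_f + a₂ v_c`, where `v_f` and `v_c` are sample means of the local gradients.
`L`-smoothness gives `F (w - v / L) ≤ F w + (‖v - ∇F w‖² - ‖∇F w‖²) / (2L)`. A sample mean over
`k` of the `N` points deviates from the full mean `∇F w` by at most `2 (N - k) / N` times a bound
on the local gradients, whence `(N_f + N_c)² ‖v - ∇F w‖² ≤ 4 A (ξ₁ + ξ₂ ‖∇F w‖²)`. Strong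
convexity gives the Polyak–Łojasiewicz inequality `2 μ (F w - F w*) ≤ ‖∇F w‖²`. Together these
contract the gap, `e_{t+1} ≤ ρ₁ e_t + ρ₂`, with `0 ≤ ρ₁ < 1` because `4 A ξ₂ < (N_f + N_c)²`,
and unrolling the recursion gives the bound.
-/

open Finset InnerProductSpace

local notation "⟪" x ", " y "⟫" => @inner ℝ _ _ x y

section

variable {E : Type*} [NormedAddCommGroup E] {ι : Type*}

theorem norm_sum_le_card_mul {S : Finset ι} {g : ι → E} {b : ℝ} (hg : ∀ n ∈ S, ‖g n‖ ≤ b) :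
    ‖∑ n ∈ S, g n‖ ≤ #S * b :=
  (norm_sum_le _ _).trans <| (sum_le_card_nsmul _ _ _ hg).trans_eq (nsmul_eq_mul _ _)

section SampleMean

variable [NormedSpace ℝ E]

noncomputable def sampleMean (S : Finset ι) (g : ι → E) : E := (1 / (#S : ℝ)) • ∑ n ∈ S, g n

variable {D S Sf Sc : Finset ι} {g : ι → E} {b : ℝ}

theorem norm_sampleMean_sub_le (hS : S ⊆ D) (hS0 : S.Nonempty) (hg : ∀ n ∈ D, ‖g n‖ ≤ b) :
    ‖sampleMean S g - sampleMean D g‖ ≤ 2 * ((#D - #S) / #D) * b := by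
  classical
  have hs : (0 : ℝ) < #S := by exact_mod_cast hS0.card_pos
  have hsD : (#S : ℝ) ≤ #D := by exact_mod_cast card_le_card hS
  have hD : (0 : ℝ) < #D := hs.trans_le hsD
  have hcoef : 0 ≤ 1 / (#S : ℝ) - 1 / #D := sub_nonneg.mpr (one_div_le_one_div_of_le hs hsD)
  have hsplit : sampleMean S g - sampleMean D g =
      (1 / (#S : ℝ) - 1 / #D) • ∑ n ∈ S, g n - (1 / (#D : ℝ)) • ∑ n ∈ D \ S, g n := by
    rw [sampleMean, sampleMean, ← sum_sdiff hS]
    module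
  have hin := norm_sum_le_card_mul fun n hn => hg n (hS hn)
  have hout := norm_sum_le_card_mul (S := D \ S) fun n hn => hg n (mem_sdiff.mp hn).1
  rw [card_sdiff_of_subset hS, Nat.cast_sub (card_le_card hS)] at hout
  calc ‖sampleMean S g - sampleMean D g‖
      ≤ (1 / (#S : ℝ) - 1 / #D) * ‖∑ n ∈ S, g n‖ + 1 / (#D : ℝ) * ‖∑ n ∈ D \ S, g n‖ := by
        rw [hsplit]
        refine (norm_sub_le _ _).trans_eq ?_
        rw [norm_smul, norm_smul, Real.norm_of_nonneg hcoef, Real.norm_of_nonneg (by positivity)]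
    _ ≤ (1 / (#S : ℝ) - 1 / #D) * (#S * b) + 1 / (#D : ℝ) * ((#D - #S) * b) := by gcongr
    _ = 2 * ((#D - #S) / #D) * b := by field_simp; ring

theorem mul_norm_aggregate_sub_sampleMean_le (hSf : Sf ⊆ D) (hSc : Sc ⊆ D)
    (hSf0 : Sf.Nonempty) (hSc0 : Sc.Nonempty) (hg : ∀ n ∈ D, ‖g n‖ ≤ b) :
    ((#Sf : ℝ) + #Sc) * ‖((#Sf : ℝ) / (#Sf + #Sc)) • sampleMean Sf g
        + ((#Sc : ℝ) / (#Sf + #Sc)) • sampleMean Sc g - sampleMean D g‖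
      ≤ 2 * ((#Sf : ℝ) * (#D - #Sf) + #Sc * (#D - #Sc)) / #D * b := by
  have hf : (0 : ℝ) < #Sf := by exact_mod_cast hSf0.card_pos
  have hc : (0 : ℝ) < #Sc := by exact_mod_cast hSc0.card_pos
  set x := ((#Sf : ℝ) / (#Sf + #Sc)) • sampleMean Sf g
    + ((#Sc : ℝ) / (#Sf + #Sc)) • sampleMean Sc g - sampleMean D g
  have hsplit : ((#Sf : ℝ) + #Sc) • x = (#Sf : ℝ) • (sampleMean Sf g - sampleMean D g)
      + (#Sc : ℝ) • (sampleMean Sc g - sampleMean D g) := by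
    rw [smul_sub, smul_add, smul_smul, smul_smul, mul_div_cancel₀ _ (by positivity),
      mul_div_cancel₀ _ (by positivity)]
    module
  calc ((#Sf : ℝ) + #Sc) * ‖x‖
      ≤ #Sf * ‖sampleMean Sf g - sampleMean D g‖ + #Sc * ‖sampleMean Sc g - sampleMean D g‖ := by
        rw [← Real.norm_of_nonneg (by positivity : (0 : ℝ) ≤ #Sf + #Sc), ← norm_smul, hsplit]
        refine (norm_add_le _ _).trans_eq ?_
        rw [norm_smul, norm_smul, Real.norm_natCast, Real.norm_natCast]
    _ ≤ #Sf * (2 * ((#D - #Sf) / #D) * b) + #Sc * (2 * ((#D - #Sc) / #D) * b) := by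
        gcongr
        · exact norm_sampleMean_sub_le hSf hSf0 hg
        · exact norm_sampleMean_sub_le hSc hSc0 hg
    _ = 2 * ((#Sf : ℝ) * (#D - #Sf) + #Sc * (#D - #Sc)) / #D * b := by ring

theorem sq_mul_sq_norm_aggregate_sub_sampleMean_le (hSf : Sf ⊆ D) (hSc : Sc ⊆ D)
    (hSf0 : Sf.Nonempty) (hSc0 : Sc.Nonempty) {B : ℝ} (hg : ∀ n ∈ D, ‖g n‖ ^ 2 ≤ B) :
    ((#Sf : ℝ) + #Sc) ^ 2 * ‖((#Sf : ℝ) / (#Sf + #Sc)) • sampleMean Sf g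
        + ((#Sc : ℝ) / (#Sf + #Sc)) • sampleMean Sc g - sampleMean D g‖ ^ 2
      ≤ 4 * ((#Sf : ℝ) * (#D - #Sf) + #Sc * (#D - #Sc)) * B := by
  obtain ⟨m, hm⟩ := hSf0
  have hB : 0 ≤ B := (sq_nonneg _).trans (hg m (hSf hm))
  have hD : (0 : ℝ) < #D := by exact_mod_cast card_pos.mpr ⟨m, hSf hm⟩
  have hfD : (#Sf : ℝ) ≤ #D := by exact_mod_cast card_le_card hSf
  have hcD : (#Sc : ℝ) ≤ #D := by exact_mod_cast card_le_card hSc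
  have h := mul_norm_aggregate_sub_sampleMean_le hSf hSc ⟨m, hm⟩ hSc0
    fun n hn => Real.le_sqrt_of_sq_le (hg n hn)
  set A := (#Sf : ℝ) * (#D - #Sf) + #Sc * (#D - #Sc)
  have hA : 0 ≤ A := by positivity
  have hAD : A ≤ #D ^ 2 := by nlinarith
  calc _ = (((#Sf : ℝ) + #Sc) * ‖((#Sf : ℝ) / (#Sf + #Sc)) • sampleMean Sf g
        + ((#Sc : ℝ) / (#Sf + #Sc)) • sampleMean Sc g - sampleMean D g‖) ^ 2 := by ring
    _ ≤ (2 * A / #D * √B) ^ 2 := by gcongr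
    _ = 4 * A * B * (A / #D ^ 2) := by rw [mul_pow, Real.sq_sqrt hB]; ring
    _ ≤ 4 * A * B := mul_le_of_le_one_right (by positivity) ((div_le_one (by positivity)).mpr hAD)

end SampleMean

section InnerProduct

variable [InnerProductSpace ℝ E]

theorem gradient_const_mul_sum [CompleteSpace E] {D : Finset ι} {f : ι → E → ℝ}
    {x : E} (hf : ∀ n ∈ D, DifferentiableAt ℝ (f n) x) (c : ℝ) :
    gradient (fun w => c * ∑ n ∈ D, f n w) x = c • ∑ n ∈ D, gradient (f n) x := by
  have hsum : HasFDerivAt (fun w => ∑ n ∈ D, f n w)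
      (∑ n ∈ D, toDual ℝ E (gradient (f n) x)) x :=
    HasFDerivAt.fun_sum fun n hn => (hf n hn).hasGradientAt.hasFDerivAt
  refine (hasFDerivAt_iff_hasGradientAt.mp (hsum.const_mul c)).gradient.trans ?_
  simp [map_sum, gradient]

theorem neg_sq_norm_le_two_mul_inner_add (μ : ℝ) (u g : E) :
    -‖g‖ ^ 2 ≤ 2 * μ * ⟪u, g⟫ + μ ^ 2 * ‖u‖ ^ 2 := by
  have h := norm_add_sq_real (μ • u) g
  rw [norm_smul, real_inner_smul_left, Real.norm_eq_abs, mul_pow, sq_abs] at h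
  nlinarith [sq_nonneg ‖μ • u + g‖]

variable [CompleteSpace E] {F : E → ℝ} {μ L : ℝ}

theorem two_mul_sub_le_sq_norm_gradient_of_strongConvex (hμ : 0 < μ)
    (hsc : ∀ w w' : E, F w ≥ F w' + ⟪w - w', gradient F w'⟫ + μ / 2 * ‖w - w'‖ ^ 2)
    (x y : E) : 2 * μ * (F y - F x) ≤ ‖gradient F y‖ ^ 2 := by
  nlinarith [hsc x y, neg_sq_norm_le_two_mul_inner_add μ (x - y) (gradient F y)]

theorem apply_sub_one_div_smul_le_of_smooth (hL : L ≠ 0)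
    (hsm : ∀ w w' : E, F w ≤ F w' + ⟪w - w', gradient F w'⟫ + L / 2 * ‖w - w'‖ ^ 2)
    (w v : E) :
    F (w - (1 / L) • v) ≤
      F w + (‖v - gradient F w‖ ^ 2 - ‖gradient F w‖ ^ 2) / (2 * L) := by
  have h := hsm (w - (1 / L) • v) w
  rw [sub_sub_cancel_left, inner_neg_left, real_inner_smul_left, norm_neg, norm_smul,
    Real.norm_eq_abs, mul_pow, sq_abs] at h
  refine h.trans_eq ?_
  rw [norm_sub_sq_real]
  field_simp
  ring

theorem gap_le_of_inexact_gradient_step (hμ : 0 < μ) (hL : 0 < L)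
    (hsc : ∀ w w' : E, F w ≥ F w' + ⟪w - w', gradient F w'⟫ + μ / 2 * ‖w - w'‖ ^ 2)
    (hsm : ∀ w w' : E, F w ≤ F w' + ⟪w - w', gradient F w'⟫ + L / 2 * ‖w - w'‖ ^ 2)
    {A S ξ1 ξ2 : ℝ} (hS : 0 < S) (hξ2 : 4 * A * ξ2 ≤ S) (w v wstar : E)
    (hdev : S * ‖v - gradient F w‖ ^ 2 ≤ 4 * A * (ξ1 + ξ2 * ‖gradient F w‖ ^ 2)) :
    F (w - (1 / L) • v) - F wstar ≤
      (1 - μ / L + 4 * μ * ξ2 * A / (L * S)) * (F w - F wstar) + 2 * ξ1 * A / (L * S) := by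
  have hdesc := apply_sub_one_div_smul_le_of_smooth hL.ne' hsm w v
  have hPL := two_mul_sub_le_sq_norm_gradient_of_strongConvex hμ hsc wstar w
  set g := ‖gradient F w‖ ^ 2
  set d := ‖v - gradient F w‖ ^ 2
  have key : 2 * L * S * (F (w - (1 / L) • v) - F wstar) ≤
      2 * (L * S - μ * S + 4 * μ * ξ2 * A) * (F w - F wstar) + 4 * ξ1 * A := by
    have hdesc' : 2 * L * (F (w - (1 / L) • v) - F w) ≤ d - g := by
      have := (le_div_iff₀ (by positivity : (0 : ℝ) < 2 * L)).mp (sub_le_iff_le_add'.mpr hdesc)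
      linarith
    nlinarith [mul_le_mul_of_nonneg_left hdesc' hS.le,
      mul_le_mul_of_nonneg_left hPL (sub_nonneg.mpr hξ2)]
  rw [← mul_le_mul_iff_of_pos_left (by positivity : 0 < 2 * L * S)]
  refine key.trans_eq ?_
  field_simp
  ring

end InnerProduct

theorem le_pow_mul_add_geom_of_le_mul_add {e : ℕ → ℝ} {ρ c : ℝ} {T : ℕ} (hρ0 : 0 ≤ ρ)
    (hρ1 : ρ ≠ 1) (h : ∀ t, 1 ≤ t → t ≤ T → e (t + 1) ≤ ρ * e t + c) :
    e (T + 1) ≤ ρ ^ T * e 1 + c * (1 - ρ ^ T) / (1 - ρ) := by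
  have h1ρ : 1 - ρ ≠ 0 := sub_ne_zero.mpr hρ1.symm
  suffices ∀ k ≤ T, e (k + 1) ≤ ρ ^ k * e 1 + c * (1 - ρ ^ k) / (1 - ρ) from this T le_rfl
  intro k
  induction k with
  | zero => simp
  | succ k ih =>
    intro hk
    calc e (k + 1 + 1) ≤ ρ * e (k + 1) + c := h (k + 1) (Nat.le_add_left 1 k) hk
      _ ≤ ρ * (ρ ^ k * e 1 + c * (1 - ρ ^ k) / (1 - ρ)) + c := by gcongr; exact ih (by omega)
      _ = ρ ^ (k + 1) * e 1 + c * (1 - ρ ^ (k + 1)) / (1 - ρ) := by field_simp; ring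

end

theorem semifl_optimality_gap_error_free_general
    {E : Type*} [NormedAddCommGroup E] [InnerProductSpace ℝ E] [CompleteSpace E]
    {ι : Type*} (D : Finset ι) (N : ℕ) (hN : D.card = N)
    (f : ι → E → ℝ) (hf : ∀ n ∈ D, Differentiable ℝ (f n))
    (F : E → ℝ) (hF : ∀ w : E, F w = (1 / (N : ℝ)) * ∑ n ∈ D, f n w)
    (μ L : ℝ) (hμ : 0 < μ) (hμL : μ ≤ L)
    (hsc : ∀ w w' : E,
      F w ≥ F w' + ⟪w - w', gradient F w'⟫ + μ / 2 * ‖w - w'‖ ^ 2)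
    (hsm : ∀ w w' : E,
      F w ≤ F w' + ⟪w - w', gradient F w'⟫ + L / 2 * ‖w - w'‖ ^ 2)
    (ξ1 ξ2 : ℝ) (hξ2pos : 0 < ξ2)
    (hgradbound : ∀ n ∈ D, ∀ w : E,
      ‖gradient (f n) w‖ ^ 2 ≤ ξ1 + ξ2 * ‖gradient F w‖ ^ 2)
    (wstar : E)
    (Nf Nc : ℕ) (hNf : 0 < Nf) (hNc : 0 < Nc)
    (A : ℝ) (hA : A = (Nf : ℝ) * ((N : ℝ) - Nf) + (Nc : ℝ) * ((N : ℝ) - Nc))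
    (hApos : 0 < A)
    (hξ2A : ξ2 < ((Nf : ℝ) + Nc) ^ 2 / (4 * A))
    (a1 a2 : ℝ) (ha1 : a1 = (Nf : ℝ) / ((Nf : ℝ) + Nc))
    (ha2 : a2 = (Nc : ℝ) / ((Nf : ℝ) + Nc))
    (ρ1 ρ2 : ℝ)
    (hρ1 : ρ1 = 1 - μ / L + 4 * μ * ξ2 * A / (L * ((Nf : ℝ) + Nc) ^ 2))
    (hρ2 : ρ2 = 2 * ξ1 * A / (L * ((Nf : ℝ) + Nc) ^ 2))
    (T : ℕ)
    (Sf Sc : ℕ → Finset ι)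
    (hSfD : ∀ t : ℕ, 1 ≤ t → t ≤ T → Sf t ⊆ D)
    (hScD : ∀ t : ℕ, 1 ≤ t → t ≤ T → Sc t ⊆ D)
    (hSf : ∀ t : ℕ, 1 ≤ t → t ≤ T → (Sf t).card = Nf)
    (hSc : ∀ t : ℕ, 1 ≤ t → t ≤ T → (Sc t).card = Nc)
    (w : ℕ → E)
    (hupd : ∀ t : ℕ, 1 ≤ t → t ≤ T →
      w (t + 1) = w t - (1 / L) •
        (a1 • ((1 / (Nf : ℝ)) • ∑ n ∈ Sf t, gradient (f n) (w t))
          + a2 • ((1 / (Nc : ℝ)) • ∑ n ∈ Sc t, gradient (f n) (w t)))) :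
    F (w (T + 1)) - F wstar ≤
      ρ1 ^ T * (F (w 1) - F wstar) + ρ2 * (1 - ρ1 ^ T) / (1 - ρ1) := by
  have hL : 0 < L := hμ.trans_le hμL
  have hS : (0 : ℝ) < ((Nf : ℝ) + Nc) ^ 2 := by positivity
  have hξ2S : 4 * A * ξ2 < ((Nf : ℝ) + Nc) ^ 2 := by
    rwa [lt_div_iff₀ (by positivity), mul_comm] at hξ2A
  have hgradF : ∀ x, gradient F x = sampleMean D fun n => gradient (f n) x := fun x => by
    rw [funext hF, gradient_const_mul_sum fun n hn => (hf n hn).differentiableAt, sampleMean, hN]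
  have hstep : ∀ t, 1 ≤ t → t ≤ T →
      F (w (t + 1)) - F wstar ≤ ρ1 * (F (w t) - F wstar) + ρ2 := by
    intro t ht htT
    have hdev := sq_mul_sq_norm_aggregate_sub_sampleMean_le (hSfD t ht htT) (hScD t ht htT)
      (card_pos.mp (hSf t ht htT ▸ hNf)) (card_pos.mp (hSc t ht htT ▸ hNc))
      fun n hn => hgradbound n hn (w t)
    rw [← hgradF] at hdev
    simp only [sampleMean, hSf t ht htT, hSc t ht htT, hN, ← ha1, ← ha2, ← hA] at hdev
    rw [hupd t ht htT, hρ1, hρ2]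
    exact gap_le_of_inexact_gradient_step hμ hL hsc hsm hS hξ2S.le _ _ _ hdev
  have hcontr : 4 * μ * ξ2 * A / (L * ((Nf : ℝ) + Nc) ^ 2) < μ / L := by
    rw [div_lt_div_iff₀ (by positivity) hL]
    nlinarith [mul_lt_mul_of_pos_left hξ2S (mul_pos hμ hL)]
  have hρ1_nonneg : 0 ≤ ρ1 := by
    have hμL' : μ / L ≤ 1 := (div_le_one hL).mpr hμL
    have hpen : 0 ≤ 4 * μ * ξ2 * A / (L * ((Nf : ℝ) + Nc) ^ 2) := by positivity
    rw [hρ1]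
    linarith
  have hρ1_lt_one : ρ1 < 1 := by rw [hρ1]; linarith
  exact le_pow_mul_add_geom_of_le_mul_add (e := fun t => F (w t) - F wstar)
    hρ1_nonneg hρ1_lt_one.ne hstep

/-- Corollary 3 of the paper: optimality gap of SemiFL over error-free wireless
channels (no aggregation distortion and no noise) after `T` rounds. -/
theorem semifl_optimality_gap_error_free
    {E : Type*} [NormedAddCommGroup E] [InnerProductSpace ℝ E] [CompleteSpace E]
    {ι : Type*} (D : Finset ι) (N : ℕ) (hN : D.card = N)
    (f : ι → E → ℝ) (hf : ∀ n ∈ D, Differentiable ℝ (f n))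
    (F : E → ℝ) (hF : ∀ w : E, F w = (1 / (N : ℝ)) * ∑ n ∈ D, f n w)
    (μ L : ℝ) (hμ : 0 < μ) (hμL : μ ≤ L)
    (hsc : ∀ w w' : E,
      F w ≥ F w' + ⟪w - w', gradient F w'⟫ + μ / 2 * ‖w - w'‖ ^ 2)
    (hsm : ∀ w w' : E,
      F w ≤ F w' + ⟪w - w', gradient F w'⟫ + L / 2 * ‖w - w'‖ ^ 2)
    (ξ1 ξ2 : ℝ) (hξ1 : 0 ≤ ξ1) (hξ2pos : 0 < ξ2)
    (hgradbound : ∀ n ∈ D, ∀ w : E,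
      ‖gradient (f n) w‖ ^ 2 ≤ ξ1 + ξ2 * ‖gradient F w‖ ^ 2)
    (wstar : E) (hmin : ∀ w : E, F wstar ≤ F w)
    (Nf Nc : ℕ) (hNf : 0 < Nf) (hNc : 0 < Nc) (hNfN : Nf ≤ N) (hNcN : Nc ≤ N)
    (A : ℝ) (hA : A = (Nf : ℝ) * ((N : ℝ) - Nf) + (Nc : ℝ) * ((N : ℝ) - Nc))
    (hApos : 0 < A)
    (hξ2A : ξ2 < ((Nf : ℝ) + Nc) ^ 2 / (4 * A))
    (a1 a2 : ℝ) (ha1 : a1 = (Nf : ℝ) / ((Nf : ℝ) + Nc))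
    (ha2 : a2 = (Nc : ℝ) / ((Nf : ℝ) + Nc))
    (ρ1 ρ2 : ℝ)
    (hρ1 : ρ1 = 1 - μ / L + 4 * μ * ξ2 * A / (L * ((Nf : ℝ) + Nc) ^ 2))
    (hρ2 : ρ2 = 2 * ξ1 * A / (L * ((Nf : ℝ) + Nc) ^ 2))
    (T : ℕ) (hT : 1 ≤ T)
    (Sf Sc : ℕ → Finset ι)
    (hSfD : ∀ t : ℕ, 1 ≤ t → t ≤ T → Sf t ⊆ D)
    (hScD : ∀ t : ℕ, 1 ≤ t → t ≤ T → Sc t ⊆ D)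
    (hSf : ∀ t : ℕ, 1 ≤ t → t ≤ T → (Sf t).card = Nf)
    (hSc : ∀ t : ℕ, 1 ≤ t → t ≤ T → (Sc t).card = Nc)
    (w : ℕ → E)
    (hupd : ∀ t : ℕ, 1 ≤ t → t ≤ T →
      w (t + 1) = w t - (1 / L) •
        (a1 • ((1 / (Nf : ℝ)) • ∑ n ∈ Sf t, gradient (f n) (w t))
          + a2 • ((1 / (Nc : ℝ)) • ∑ n ∈ Sc t, gradient (f n) (w t)))) :
    F (w (T + 1)) - F wstar ≤
      ρ1 ^ T * (F (w 1) - F wstar) + ρ2 * (1 - ρ1 ^ T) / (1 - ρ1) :=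
  semifl_optimality_gap_error_free_general D N hN f hf F hF μ L hμ hμL hsc hsm ξ1 ξ2 hξ2pos
    hgradbound wstar Nf Nc hNf hNc A hA hApos hξ2A a1 a2 ha1 ha2 ρ1 ρ2 hρ1 hρ2 T Sf Sc hSfD hScD hSf
    hSc w hupd
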